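/- Let f ∈ C²([0,∞)) be convex, positive, nondecreasing with f(t)/t → ∞ as t → ∞. Suppose for some γ ∈ [0,2] and ε > 0 with ε − γ > 1/2, there exist constants c > 0 and T > 0 such that f(t) f''(t) ≥ c f'(t)^{1+ε} / (t^{2−γ} f(t)^γ) for all t ≥ T. Then there exist constants C > 0 and R > 0 such that for all r ≥ R, f(r) ∫₀^r f(t) f''(t) dt ≥ C f(r)^{2+ε−γ} / r^{2+ε−γ}. -/

import Mathlib

open Real Set Filter MeasureTheory

/-!
Beyond `T` the weight `t ^ (2 - γ) * f t ^ γ` is nondecreasing, so on `[T, r]` the hypothesis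
bounds `f * f''` below by `c * f' ^ (1 + ε) / (r ^ (2 - γ) * f r ^ γ)`. Hölder's inequality
and the fundamental theorem of calculus give
`∫_T^r f' ^ (1 + ε) ≥ (f r - f T) ^ (1 + ε) / r ^ ε`, and superlinearity makes
`f r - f T ≥ f r / 2` for large `r`. The integral over `[0, T]` is nonnegative by convexity.
-/

theorem rpow_intervalIntegral_le {g : ℝ → ℝ} {a b p : ℝ} (hab : a ≤ b) (hp : 1 < p)
    (hg : ContinuousOn g (Icc a b)) (hg₀ : ∀ t ∈ Icc a b, 0 ≤ g t) :
    (∫ t in a..b, g t) ^ p ≤ (∫ t in a..b, g t ^ p) * (b - a) ^ (p - 1) := by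
  rw [intervalIntegral.integral_of_le hab, intervalIntegral.integral_of_le hab]
  set μ := volume.restrict (Ioc a b)
  have hpq : p.HolderConjugate p.conjExponent := .conjExponent hp
  have hg₀' : 0 ≤ᵐ[μ] g := ae_restrict_of_forall_mem measurableSet_Ioc
    fun t ht => hg₀ t (Ioc_subset_Icc_self ht)
  obtain ⟨M, hM⟩ := isCompact_Icc.exists_bound_of_continuousOn hg
  have hgLp : MemLp g (ENNReal.ofReal p) μ :=
    .of_bound ((hg.mono Ioc_subset_Icc_self).aestronglyMeasurable measurableSet_Ioc) M
      (ae_restrict_of_forall_mem measurableSet_Ioc fun t ht => hM t (Ioc_subset_Icc_self ht))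
  have hHolder := integral_mul_le_Lp_mul_Lq_of_nonneg hpq hg₀' (ae_of_all _ fun _ => zero_le_one)
    hgLp (memLp_const (1 : ℝ))
  simp only [mul_one, one_rpow, integral_const, smul_eq_mul, μ, measureReal_restrict_apply_univ,
    Real.volume_real_Ioc_of_le hab] at hHolder
  have hgp₀ : 0 ≤ ∫ t in Ioc a b, g t ^ p := integral_nonneg_of_ae <| by
    filter_upwards [hg₀'] with t ht using rpow_nonneg ht p
  have hexp : 1 / p.conjExponent * p = p - 1 := by
    rw [conjExponent]; field_simp
  calc (∫ t in Ioc a b, g t) ^ p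
      ≤ ((∫ t in Ioc a b, g t ^ p) ^ (1 / p) * (b - a) ^ (1 / p.conjExponent)) ^ p :=
        rpow_le_rpow (integral_nonneg_of_ae hg₀') hHolder hpq.nonneg
    _ = (∫ t in Ioc a b, g t ^ p) * (b - a) ^ (p - 1) := by
        have hba : 0 ≤ b - a := sub_nonneg.2 hab
        rw [mul_rpow (by positivity) (by positivity), ← rpow_mul hgp₀, ← rpow_mul hba,
          one_div_mul_cancel hpq.ne_zero, rpow_one, hexp]

theorem rpow_sub_le_integral_deriv_rpow {f : ℝ → ℝ} {a b p : ℝ} (hab : a ≤ b) (hp : 1 < p)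
    (hf : ∀ t ∈ Icc a b, DifferentiableAt ℝ f t) (hf' : ContinuousOn (deriv f) (Icc a b))
    (hf'₀ : ∀ t ∈ Icc a b, 0 ≤ deriv f t) :
    (f b - f a) ^ p ≤ (∫ t in a..b, deriv f t ^ p) * (b - a) ^ (p - 1) := by
  rw [← uIcc_of_le hab] at hf hf'
  rw [← intervalIntegral.integral_deriv_eq_sub hf (hf'.intervalIntegrable)]
  exact rpow_intervalIntegral_le hab hp (uIcc_of_le hab ▸ hf') hf'₀

theorem div_mul_integral_deriv_rpow_le_integral {f : ℝ → ℝ} {c γ ε T r : ℝ} (hc : 0 ≤ c)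
    (hγ : γ ∈ Icc (0:ℝ) 2) (hT : 0 < T) (hTr : T ≤ r) (hf_pos : ∀ t ∈ Icc T r, 0 < f t)
    (hmono : MonotoneOn f (Icc T r)) (hf' : ∀ t ∈ Icc T r, 0 ≤ deriv f t)
    (hint₁ : IntervalIntegrable (fun t => deriv f t ^ (1 + ε)) volume T r)
    (hint₂ : IntervalIntegrable (fun t => f t * deriv (deriv f) t) volume T r)
    (hyp : ∀ t ∈ Icc T r,
      c * deriv f t ^ (1 + ε) / (t ^ (2 - γ) * f t ^ γ) ≤ f t * deriv (deriv f) t) :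
    c / (r ^ (2 - γ) * f r ^ γ) * ∫ t in T..r, deriv f t ^ (1 + ε) ≤
      ∫ t in T..r, f t * deriv (deriv f) t := by
  rw [← intervalIntegral.integral_const_mul]
  refine intervalIntegral.integral_mono_on hTr (hint₁.const_mul _) hint₂ fun t ht => ?_
  have ht₀ : 0 < t := hT.trans_le ht.1
  have hr : r ∈ Icc T r := ⟨hTr, le_rfl⟩
  have hft := hf_pos t ht
  have hweight : t ^ (2 - γ) * f t ^ γ ≤ r ^ (2 - γ) * f r ^ γ :=
    mul_le_mul (rpow_le_rpow ht₀.le ht.2 (by linarith [hγ.2]))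
      (rpow_le_rpow hft.le (hmono ht hr ht.2) hγ.1) (rpow_nonneg hft.le γ)
      (rpow_nonneg (ht₀.le.trans ht.2) _)
  have := hf' t ht
  calc c / (r ^ (2 - γ) * f r ^ γ) * deriv f t ^ (1 + ε)
      = c * deriv f t ^ (1 + ε) / (r ^ (2 - γ) * f r ^ γ) := by ring
    _ ≤ c * deriv f t ^ (1 + ε) / (t ^ (2 - γ) * f t ^ γ) := by gcongr
    _ ≤ f t * deriv (deriv f) t := hyp t ht

theorem div_rpow_le_integral_deriv_rpow {f : ℝ → ℝ} {ε T r : ℝ} (hε : 0 < ε) (hT : 0 < T)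
    (hTr : T ≤ r) (hf : ∀ t ∈ Icc T r, DifferentiableAt ℝ f t)
    (hf' : ContinuousOn (deriv f) (Icc T r)) (hf'₀ : ∀ t ∈ Icc T r, 0 ≤ deriv f t)
    (hfT : 0 ≤ f T) (hfr : 2 * f T ≤ f r) :
    (f r / 2) ^ (1 + ε) / r ^ ε ≤ ∫ t in T..r, deriv f t ^ (1 + ε) := by
  have hHolder := rpow_sub_le_integral_deriv_rpow hTr (by linarith : 1 < 1 + ε) hf hf' hf'₀
  rw [add_sub_cancel_left] at hHolder
  have hJ₀ : 0 ≤ ∫ t in T..r, deriv f t ^ (1 + ε) :=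
    intervalIntegral.integral_nonneg hTr fun t ht => rpow_nonneg (hf'₀ t ht) _
  rw [div_le_iff₀ (rpow_pos_of_pos (hT.trans_le hTr) ε)]
  calc (f r / 2) ^ (1 + ε) ≤ (f r - f T) ^ (1 + ε) := by gcongr <;> linarith
    _ ≤ _ := hHolder
    _ ≤ _ := by gcongr; linarith

theorem rpow_div_rpow_eq_mul_div_mul_rpow {x r : ℝ} (hx : 0 < x) (hr : 0 < r) (c γ ε : ℝ) :
    c / 2 ^ (1 + ε) * x ^ (2 + ε - γ) / r ^ (2 + ε - γ) =
      x * (c / (r ^ (2 - γ) * x ^ γ) * ((x / 2) ^ (1 + ε) / r ^ ε)) := by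
  have hpow_r : r ^ (2 + ε - γ) = r ^ (2 - γ) * r ^ ε := by
    rw [← rpow_add hr]; ring_nf
  have hpow_x : x ^ (2 + ε - γ) = x * x ^ (1 + ε) / x ^ γ := by
    rw [show 2 + ε - γ = 1 + (1 + ε) - γ by ring, rpow_sub hx, rpow_add hx, rpow_one]
  rw [hpow_r, hpow_x, div_rpow hx.le zero_le_two]
  field_simp

theorem tendsto_atTop_of_tendsto_div_id_atTop {f : ℝ → ℝ}
    (h : Tendsto (fun t => f t / t) atTop atTop) : Tendsto f atTop atTop :=
  (h.atTop_mul_atTop₀ tendsto_id).congr' <|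
    (eventually_ne_atTop 0).mono fun t ht => div_mul_cancel₀ (f t) ht

theorem stmt_6_general (f : ℝ → ℝ) (hf : ContDiff ℝ 2 f)
    (hf_pos : ∀ t ∈ Ici (0:ℝ), 0 < f t)
    (hf' : ∀ t ∈ Ici (0:ℝ), 0 ≤ deriv f t)
    (hf'' : ∀ t ∈ Ici (0:ℝ), 0 ≤ deriv (deriv f) t)
    (hf_super : Tendsto (fun t => f t / t) atTop atTop)
    (γ ε : ℝ) (hγ : γ ∈ Icc (0:ℝ) 2) (hε : 0 < ε)
    (c T : ℝ) (hc : 0 < c) (hT : 0 < T)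
    (hyp : ∀ t, T ≤ t →
      c * (deriv f t) ^ (1 + ε) / (t ^ (2 - γ) * f t ^ γ) ≤ f t * deriv (deriv f) t) :
    ∃ C > 0, ∃ R > 0, ∀ r, R ≤ r →
      C * f r ^ (2 + ε - γ) / r ^ (2 + ε - γ) ≤
        f r * ∫ t in (0:ℝ)..r, f t * deriv (deriv f) t := by
  have hf_diff : Differentiable ℝ f := hf.differentiable two_ne_zero
  have hf'_cont : Continuous (deriv f) := hf.continuous_deriv one_le_two
  have hmono : MonotoneOn f (Ici 0) := monotoneOn_of_deriv_nonneg (convex_Ici 0)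
    hf.continuous.continuousOn hf_diff.differentiableOn fun t ht => hf' t (interior_subset ht)
  obtain ⟨R, hR⟩ := eventually_atTop.1 <| (eventually_ge_atTop T).and
    (tendsto_atTop.1 (tendsto_atTop_of_tendsto_div_id_atTop hf_super) (2 * f T))
  refine ⟨c / 2 ^ (1 + ε), by positivity, R, hT.trans_le (hR R le_rfl).1, fun r hr => ?_⟩
  obtain ⟨hTr, hfr_large⟩ := hR r hr
  have hr₀ : 0 < r := hT.trans_le hTr
  have hfr : 0 < f r := hf_pos r hr₀.le
  have hf'_rpow_cont : Continuous fun t => deriv f t ^ (1 + ε) :=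
    hf'_cont.rpow_const fun _ => Or.inr (by positivity)
  have hff''_cont : Continuous fun t => f t * deriv (deriv f) t :=
    hf.continuous.mul ((hf.iterate_deriv' 1 1).continuous_deriv le_rfl)
  have hJ := div_rpow_le_integral_deriv_rpow hε hT hTr (fun t _ => hf_diff t)
    hf'_cont.continuousOn (fun t ht => hf' t (hT.le.trans ht.1)) (hf_pos T hT.le).le hfr_large
  have hweighted := div_mul_integral_deriv_rpow_le_integral hc.le hγ hT hTr
    (fun t ht => hf_pos t (hT.le.trans ht.1)) (hmono.mono fun t ht => hT.le.trans ht.1)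
    (fun t ht => hf' t (hT.le.trans ht.1)) (hf'_rpow_cont.intervalIntegrable T r)
    (hff''_cont.intervalIntegrable T r) fun t ht => hyp t ht.1
  have hdrop :
      ∫ t in T..r, f t * deriv (deriv f) t ≤ ∫ t in (0:ℝ)..r, f t * deriv (deriv f) t :=
    intervalIntegral.integral_mono_interval hT.le hTr le_rfl
      (ae_restrict_of_forall_mem measurableSet_Ioc fun t ht =>
        mul_nonneg (hf_pos t ht.1.le).le (hf'' t ht.1.le))
      (hff''_cont.intervalIntegrable 0 r)
  calc c / 2 ^ (1 + ε) * f r ^ (2 + ε - γ) / r ^ (2 + ε - γ)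
      = f r * (c / (r ^ (2 - γ) * f r ^ γ) * ((f r / 2) ^ (1 + ε) / r ^ ε)) :=
        rpow_div_rpow_eq_mul_div_mul_rpow hfr hr₀ c γ ε
    _ ≤ f r * (c / (r ^ (2 - γ) * f r ^ γ) * ∫ t in T..r, deriv f t ^ (1 + ε)) := by gcongr
    _ ≤ f r * ∫ t in T..r, f t * deriv (deriv f) t := by gcongr
    _ ≤ f r * ∫ t in (0:ℝ)..r, f t * deriv (deriv f) t := by gcongr

theorem stmt_6 (f : ℝ → ℝ) (hf : ContDiff ℝ 2 f)
    (hf_pos : ∀ t ∈ Ici (0:ℝ), 0 < f t)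
    (hf' : ∀ t ∈ Ici (0:ℝ), 0 ≤ deriv f t)
    (hf'' : ∀ t ∈ Ici (0:ℝ), 0 ≤ deriv (deriv f) t)
    (hf_super : Tendsto (fun t => f t / t) atTop atTop)
    (γ ε : ℝ) (hγ : γ ∈ Icc (0:ℝ) 2) (hε : 0 < ε) (hεγ : 1/2 < ε - γ)
    (c T : ℝ) (hc : 0 < c) (hT : 0 < T)
    (hyp : ∀ t, T ≤ t →
      c * (deriv f t) ^ (1 + ε) / (t ^ (2 - γ) * f t ^ γ) ≤ f t * deriv (deriv f) t) :
    ∃ C > 0, ∃ R > 0, ∀ r, R ≤ r →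
      C * f r ^ (2 + ε - γ) / r ^ (2 + ε - γ) ≤
        f r * ∫ t in (0:ℝ)..r, f t * deriv (deriv f) t :=
  stmt_6_general f hf hf_pos hf' hf'' hf_super γ ε hγ hε c T hc hT hyp
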